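/- arXiv:2107.00461 — 2 statements merged into one kernel-verified Lean document; each statement's English description precedes it below -/
import Mathlib

section
/- Let A and B be (possibly empty) finite sequences of positive integers and let x be a positive integer. Then ⟨A, x, B⟩ ≥ (x/4)·⟨A, 1, B⟩, where (A, x, B) denotes the concatenation of A, the single element x, and B. -/
/-!
Gluing two continuants: `⟨u, v⟩ = ⟨u⟩⟨v⟩ + ⟨u, 0⟩⟨0, v⟩`, where appending a zero entry
amounts to deleting the adjacent entry. For positive entries the correction term lies between
`0` and `⟨u⟩⟨v⟩`, so `⟨u⟩⟨v⟩ ≤ ⟨u, v⟩ ≤ 2⟨u⟩⟨v⟩`. Splitting at `x`, resp. at `1`, twice gives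
`⟨A, x, B⟩ ≥ x⟨A⟩⟨B⟩` and `⟨A, 1, B⟩ ≤ 4⟨A⟩⟨B⟩`.
-/

/-- Head-recursion continuant helper. -/
def contAux : List ℕ → ℕ
  | [] => 1
  | [a] => a
  | a :: b :: l => a * contAux (b :: l) + contAux l

/-- The continuant `⟨a_1,…,a_t⟩`, satisfying `⟨⟩ = 1`, `⟨a⟩ = a` and
`⟨a_1,…,a_t⟩ = a_t⟨a_1,…,a_{t-1}⟩ + ⟨a_1,…,a_{t-2}⟩`. -/
def cont (l : List ℕ) : ℕ := contAux l.reverse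

noncomputable def Phi : ℝ := (1 + Real.sqrt 5) / 2

lemma contAux_zero_cons_cons (a : ℕ) (l : List ℕ) : contAux (0 :: a :: l) = contAux l := by
  rcases l with _ | ⟨b, l⟩ <;> simp [contAux]

lemma contAux_cons (a : ℕ) (l : List ℕ) :
    contAux (a :: l) = a * contAux l + contAux (0 :: l) := by
  rcases l with _ | ⟨b, _ | ⟨c, l⟩⟩ <;> simp [contAux]

lemma contAux_append (u v : List ℕ) :
    contAux (u ++ v) = contAux u * contAux v + contAux (u ++ [0]) * contAux (0 :: v) := by
  induction u using contAux.induct with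
  | case1 => simp [contAux]
  | case2 a => simp [contAux, contAux_cons a v]
  | case3 a b l ihbl ihl =>
    simp only [List.cons_append, contAux] at ihbl ⊢
    rw [ihbl, ihl]
    ring

lemma contAux_append_zero_le {u : List ℕ} (hu : ∀ a ∈ u, 0 < a) :
    contAux (u ++ [0]) ≤ contAux u := by
  induction u using contAux.induct with
  | case1 => simp [contAux]
  | case2 a => simpa [contAux, Nat.one_le_iff_ne_zero, Nat.pos_iff_ne_zero] using hu a
  | case3 a b l ihbl ihl =>
    simp only [List.cons_append, contAux]
    gcongr
    · exact ihbl fun c hc => hu c (List.mem_cons_of_mem a hc)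
    · exact ihl fun c hc => hu c (by simp [hc])

lemma contAux_zero_cons_le {v : List ℕ} (hv : ∀ a ∈ v, 0 < a) :
    contAux (0 :: v) ≤ contAux v := by
  rcases v with _ | ⟨a, l⟩
  · simp [contAux]
  · rw [contAux_zero_cons_cons, contAux_cons a l]
    nlinarith [hv a List.mem_cons_self]

lemma cont_append (u v : List ℕ) :
    cont (u ++ v) = cont u * cont v + cont (u ++ [0]) * cont (0 :: v) := by
  simp only [cont, List.reverse_append, List.reverse_cons, List.reverse_nil, List.nil_append,
    List.singleton_append]
  rw [contAux_append]
  ring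

lemma cont_mul_cont_le_cont_append (u v : List ℕ) : cont u * cont v ≤ cont (u ++ v) :=
  cont_append u v ▸ Nat.le_add_right _ _

lemma cont_append_le_two_mul {u v : List ℕ} (hu : ∀ a ∈ u, 0 < a) (hv : ∀ a ∈ v, 0 < a) :
    cont (u ++ v) ≤ 2 * (cont u * cont v) := by
  have hu' : cont (u ++ [0]) ≤ cont u := by
    simpa [cont] using contAux_zero_cons_le fun a ha => hu a (List.mem_reverse.1 ha)
  have hv' : cont (0 :: v) ≤ cont v := by
    simpa [cont] using contAux_append_zero_le fun a ha => hv a (List.mem_reverse.1 ha)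
  rw [cont_append, two_mul]
  gcongr

lemma mul_cont_le_four_mul_cont {A B : List ℕ} (hA : ∀ a ∈ A, 0 < a) (hB : ∀ b ∈ B, 0 < b)
    (x : ℕ) : x * cont (A ++ 1 :: B) ≤ 4 * cont (A ++ x :: B) := by
  have hA1 : ∀ a ∈ A ++ [1], 0 < a := by simpa [or_imp, forall_and] using hA
  rw [← List.singleton_append, ← List.append_assoc, ← List.singleton_append (l := B),
    ← List.append_assoc]
  calc x * cont (A ++ [1] ++ B)
      ≤ x * (2 * (cont (A ++ [1]) * cont B)) := by gcongr; exact cont_append_le_two_mul hA1 hB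
    _ ≤ x * (2 * (2 * (cont A * cont [1]) * cont B)) := by
        gcongr; exact cont_append_le_two_mul hA (by simp)
    _ = 4 * (cont A * cont [x] * cont B) := by simp [cont, contAux]; ring
    _ ≤ 4 * cont (A ++ [x] ++ B) := by
        gcongr
        exact (Nat.mul_le_mul_right _ (cont_mul_cont_le_cont_append _ _)).trans
          (cont_mul_cont_le_cont_append _ _)

theorem stmt5_general (A B : List ℕ) (hA : ∀ b ∈ A, 0 < b) (hB : ∀ b ∈ B, 0 < b)
    (x : ℕ) :
    (cont (A ++ x :: B) : ℝ) ≥ (x : ℝ) / 4 * (cont (A ++ 1 :: B) : ℝ) := by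
  have h : (x * cont (A ++ 1 :: B) : ℝ) ≤ 4 * cont (A ++ x :: B) := by
    exact_mod_cast mul_cont_le_four_mul_cont hA hB x
  linarith

/-- For sequences `A, B` of positive integers and a positive integer `x`,
`⟨A, x, B⟩ ≥ (x/4) ⟨A, 1, B⟩`. -/
theorem stmt5 (A B : List ℕ) (hA : ∀ b ∈ A, 0 < b) (hB : ∀ b ∈ B, 0 < b)
    (x : ℕ) (hx : 0 < x) :
    (cont (A ++ x :: B) : ℝ) ≥ (x : ℝ) / 4 * (cont (A ++ 1 :: B) : ℝ) :=
  stmt5_general A B hA hB x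
end

section
/- Let x = [0;a_1,a_2,…] ∈ (0,1) be irrational such that the derivative ?'(x) of the Minkowski question-mark function exists at x and equals 0. Then for every c > 0 there exists T such that for all t ≥ T and every partition of the sequence (a_1,…,a_t) into consecutive blocks B_1, B_2, …, B_m, one has ∏_{j=1}^m ⟨B_j⟩ < c · (√2)^{S_x(t)}. -/
/-!
Splitting a continuant into blocks only decreases it, so `∏ ⟨B_j⟩ ≤ q_t := ⟨a_1, …, a_t⟩`.
The numbers `y₁ = [0; a_1, …, a_t, 1, 1, 1, …]` and `y₂ = [0; a_1, …, a_t, 2, 1, 1, …]` share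
their first `t` partial quotients with `x`, so both lie within `2 / q_t²` of `x`, while the
Denjoy–Salem series gives `|?(y₁) - ?(y₂)| = 2^(-S_x(t)) / 3`. As `?'(x) = 0`, the left side is
`o(q_t⁻²)`, that is, `q_t = o(√2 ^ S_x(t))`.
-/

open Filter Topology

/-- `S_x(t) = a_1 + ⋯ + a_t` where `a i` denotes `a_{i+1}`. -/
def cfSum (a : ℕ → ℕ) (t : ℕ) : ℕ := ∑ i ∈ Finset.range t, a i

/-- `x = [0;a_1,a_2,…]`: all partial quotients are positive and the convergents
`⟨a_2,…,a_t⟩ / ⟨a_1,…,a_t⟩` tend to `x`. -/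
def IsCFOf (x : ℝ) (a : ℕ → ℕ) : Prop :=
  (∀ i, 0 < a i) ∧
  Filter.Tendsto
    (fun t => ((cont (((List.range t).map a).tail) : ℝ) / (cont ((List.range t).map a) : ℝ)))
    Filter.atTop (nhds x)

noncomputable def kappa1 : ℝ := 2 * Real.log Phi / Real.log 2
noncomputable def kappa4 : ℝ := Real.sqrt ((kappa1 - 1) / Real.log 2)

/-- `Q` is the Minkowski question-mark function: continuous and strictly increasing on `[0,1]`,
`Q 0 = 0`, `Q 1 = 1`, and given on irrationals by the Denjoy–Salem series. -/
def IsMinkowski (Q : ℝ → ℝ) : Prop :=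
  ContinuousOn Q (Set.Icc 0 1) ∧ StrictMonoOn Q (Set.Icc 0 1) ∧
  Q 0 = 0 ∧ Q 1 = 1 ∧
  ∀ x ∈ Set.Ioo (0:ℝ) 1, Irrational x → ∀ a : ℕ → ℕ, IsCFOf x a →
    Q x = ∑' k : ℕ, (-1 : ℝ) ^ k * (2 : ℝ) ^ ((1 : ℤ) - (cfSum a (k+1) : ℤ))

open Finset

lemma one_le_contAux : ∀ {l : List ℕ}, (∀ x ∈ l, 0 < x) → 1 ≤ contAux l
  | [], _ => le_rfl
  | [a], h => h a (by simp)
  | a :: b :: l, h => by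
    have hbl : 1 ≤ contAux (b :: l) := one_le_contAux fun x hx => h x (List.mem_cons_of_mem _ hx)
    have ha : 1 ≤ a := h a (by simp)
    show 1 ≤ a * contAux (b :: l) + contAux l
    nlinarith

lemma one_le_cont {l : List ℕ} (h : ∀ x ∈ l, 0 < x) : 1 ≤ cont l :=
  one_le_contAux fun x hx => h x (List.mem_reverse.1 hx)

lemma contAux_mul_le_contAux_append : ∀ X Y : List ℕ, contAux X * contAux Y ≤ contAux (X ++ Y)
  | [], Y => by simp [contAux]
  | [a], [] => by simp [contAux]
  | [a], y :: Y => Nat.le_add_right _ _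
  | a :: b :: X, Y => by
    have h₁ := contAux_mul_le_contAux_append (b :: X) Y
    have h₂ := contAux_mul_le_contAux_append X Y
    calc (a * contAux (b :: X) + contAux X) * contAux Y
        = a * (contAux (b :: X) * contAux Y) + contAux X * contAux Y := by ring
      _ ≤ a * contAux (b :: X ++ Y) + contAux (X ++ Y) := by gcongr

lemma cont_mul_le_cont_append (A B : List ℕ) : cont A * cont B ≤ cont (A ++ B) := by
  rw [cont, cont, cont, List.reverse_append, mul_comm]
  exact contAux_mul_le_contAux_append _ _

lemma prod_map_cont_le_cont_flatten : ∀ L : List (List ℕ), (L.map cont).prod ≤ cont L.flatten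
  | [] => le_rfl
  | B :: L => by
    simp only [List.map_cons, List.prod_cons, List.flatten_cons]
    exact (Nat.mul_le_mul_left _ (prod_map_cont_le_cont_flatten L)).trans
      (cont_mul_le_cont_append _ _)

def cfDen (b : ℕ → ℕ) (n : ℕ) : ℕ := cont ((List.range n).map b)

def cfNum (b : ℕ → ℕ) (n : ℕ) : ℕ := cont ((List.range n).map b).tail

-- `IsCFOf x b` unfolds to `(∀ i, 0 < b i) ∧ Tendsto (cfConv b) atTop (𝓝 x)`.
noncomputable def cfConv (b : ℕ → ℕ) (n : ℕ) : ℝ := cfNum b n / cfDen b n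

section Recurrences

variable (b : ℕ → ℕ)

lemma cfDen_zero : cfDen b 0 = 1 := rfl

lemma cfDen_one : cfDen b 1 = b 0 := rfl

lemma cfDen_add_two (n : ℕ) : cfDen b (n + 2) = b (n + 1) * cfDen b (n + 1) + cfDen b n := by
  simp only [cfDen, cont, List.range_succ, List.map_append, List.reverse_append]
  rfl

lemma cfNum_succ (n : ℕ) : cfNum b (n + 1) = cfDen (fun i => b (i + 1)) n := by
  simp [cfNum, cfDen, List.range_succ_eq_map, List.map_map, Function.comp_def]

lemma cfNum_add_three (n : ℕ) :
    cfNum b (n + 3) = b (n + 2) * cfNum b (n + 2) + cfNum b (n + 1) := by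
  simp only [cfNum_succ, cfDen_add_two]

-- `p_{n+1} q_n - p_n q_{n+1} = (-1)^n` for `p = cfNum b`, `q = cfDen b`; it fails at `n = 0`.
lemma cfNum_mul_cfDen_sub (n : ℕ) :
    (cfNum b (n + 2) * cfDen b (n + 1) : ℤ) =
      cfNum b (n + 1) * cfDen b (n + 2) + (-1) ^ (n + 1) := by
  induction n with
  | zero =>
    simp only [cfNum_succ, cfDen_add_two, cfDen_one, cfDen_zero]
    push_cast; ring
  | succ n ih =>
    rw [cfNum_add_three, cfDen_add_two b (n + 1)]
    push_cast
    linear_combination -ih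

end Recurrences

noncomputable def cfGap (b : ℕ → ℕ) (n : ℕ) : ℝ := ((cfDen b n : ℝ) * cfDen b (n + 1))⁻¹

section Positive

variable {b : ℕ → ℕ} (hb : ∀ i, 0 < b i)
include hb

lemma cfDen_pos (n : ℕ) : 0 < cfDen b n :=
  one_le_cont fun x hx => by
    obtain ⟨i, -, rfl⟩ := List.mem_map.1 hx
    exact hb i

lemma cfDen_le_succ (n : ℕ) : cfDen b n ≤ cfDen b (n + 1) := by
  cases n with
  | zero => exact hb 0
  | succ n =>
    rw [cfDen_add_two]
    nlinarith [hb (n + 1)]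

lemma cfDen_lt_add_two (n : ℕ) : cfDen b n < cfDen b (n + 2) := by
  rw [cfDen_add_two]
  nlinarith [hb (n + 1), cfDen_pos hb (n + 1)]

lemma le_cfDen : ∀ n, n ≤ cfDen b n
  | 0 => Nat.zero_le _
  | 1 => hb 0
  | n + 2 => by
    have := le_cfDen (n + 1)
    rw [cfDen_add_two]
    nlinarith [hb (n + 1), cfDen_pos hb n]

lemma tendsto_cfDen_atTop : Tendsto (fun n => (cfDen b n : ℝ)) atTop atTop :=
  tendsto_atTop_mono (fun n => by exact_mod_cast le_cfDen hb n) tendsto_natCast_atTop_atTop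

lemma cfConv_succ_sub {n : ℕ} (hn : n ≠ 0) :
    cfConv b (n + 1) - cfConv b n = (-1) ^ n * cfGap b n := by
  obtain ⟨m, rfl⟩ := Nat.exists_eq_add_one_of_ne_zero hn
  have hdet : (cfNum b (m + 2) * cfDen b (m + 1) : ℝ) =
      cfNum b (m + 1) * cfDen b (m + 2) + (-1) ^ (m + 1) := by
    exact_mod_cast cfNum_mul_cfDen_sub b m
  have h₁ : (0 : ℝ) < cfDen b (m + 1) := by exact_mod_cast cfDen_pos hb _
  have h₂ : (0 : ℝ) < cfDen b (m + 2) := by exact_mod_cast cfDen_pos hb _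
  simp only [cfConv, cfGap]
  field_simp
  linear_combination hdet

lemma neg_one_pow_mul_cfConv_sub {n : ℕ} (hn : n ≠ 0) (m : ℕ) :
    (-1) ^ n * (cfConv b (n + m) - cfConv b n) = ∑ j ∈ range m, (-1) ^ j * cfGap b (n + j) := by
  induction m with
  | zero => simp
  | succ m ih =>
    have hstep := cfConv_succ_sub hb (n := n + m) (by omega)
    have hsq : ((-1 : ℝ) ^ n) ^ 2 = 1 := by rw [← pow_mul, mul_comm, pow_mul]; norm_num
    rw [sum_range_succ, ← add_assoc]
    linear_combination ih + (-1) ^ n * hstep + (-1) ^ m * cfGap b (n + m) * hsq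

lemma cfGap_pos (n : ℕ) : 0 < cfGap b n := by
  have := cfDen_pos hb n
  have := cfDen_pos hb (n + 1)
  unfold cfGap
  positivity

lemma cfGap_succ_lt (n : ℕ) : cfGap b (n + 1) < cfGap b n := by
  have h₀ : (0 : ℝ) < cfDen b n := by exact_mod_cast cfDen_pos hb n
  have h₁ : (0 : ℝ) < cfDen b (n + 1) := by exact_mod_cast cfDen_pos hb (n + 1)
  have h₂ : (cfDen b n : ℝ) < cfDen b (n + 2) := by exact_mod_cast cfDen_lt_add_two hb n
  apply inv_strictAnti₀ (by positivity)
  nlinarith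

lemma cfGap_antitone : Antitone (cfGap b) :=
  antitone_nat_of_succ_le fun n => (cfGap_succ_lt hb n).le

lemma cfGap_le_inv_sq (n : ℕ) : cfGap b n ≤ ((cfDen b n : ℝ) ^ 2)⁻¹ := by
  have h₀ : (0 : ℝ) < cfDen b n := by exact_mod_cast cfDen_pos hb n
  have h₁ : (cfDen b n : ℝ) ≤ cfDen b (n + 1) := by exact_mod_cast cfDen_le_succ hb n
  apply inv_anti₀ (by positivity)
  nlinarith

lemma tendsto_cfGap_zero : Tendsto (cfGap b) atTop (𝓝 0) :=
  squeeze_zero (fun n => (cfGap_pos hb n).le) (cfGap_le_inv_sq hb)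
    (tendsto_inv_atTop_zero.comp ((tendsto_pow_atTop two_ne_zero).comp (tendsto_cfDen_atTop hb)))

lemma exists_tendsto_cfConv : ∃ x, Tendsto (cfConv b) atTop (𝓝 x) := by
  have hanti : Antitone fun j => cfGap b (1 + j) :=
    (cfGap_antitone hb).comp_monotone fun _ _ h => Nat.add_le_add_left h 1
  obtain ⟨l, hl⟩ := hanti.tendsto_alternating_series_of_tendsto_zero
    ((tendsto_cfGap_zero hb).comp (tendsto_atTop_mono (fun j => Nat.le_add_left j 1) tendsto_id))
  refine ⟨cfConv b 1 - l, (tendsto_add_atTop_iff_nat 1).1 ?_⟩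
  refine (tendsto_const_nhds.sub hl).congr fun m => ?_
  have := neg_one_pow_mul_cfConv_sub hb one_ne_zero m
  rw [add_comm m 1]
  linarith

end Positive

lemma irrational_of_forall_exists_abs_sub_lt {x : ℝ}
    (h : ∀ d : ℕ, 0 < d → ∃ (p : ℤ) (q : ℕ), 0 < q ∧ x ≠ p / q ∧ |x - p / q| < 1 / (d * q)) :
    Irrational x := by
  rintro ⟨r, rfl⟩
  obtain ⟨p, q, hq, hne, hlt⟩ := h r.den r.pos
  have hd : (0 : ℝ) < r.den := by exact_mod_cast r.pos
  have hq' : (0 : ℝ) < q := by exact_mod_cast hq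
  have hsub : (r : ℝ) - p / q = ((r.num * q - p * r.den : ℤ) : ℝ) / (r.den * q) := by
    rw [Rat.cast_def]
    push_cast
    field_simp
  have hnum : r.num * q - p * r.den ≠ 0 := by
    intro h0
    apply hne
    rw [← sub_eq_zero, hsub, h0]
    simp
  have hone : (1 : ℝ) ≤ |((r.num * q - p * r.den : ℤ) : ℝ)| := by
    exact_mod_cast Int.one_le_abs hnum
  rw [hsub, abs_div, abs_of_pos (show (0 : ℝ) < r.den * q by positivity),
    div_lt_div_iff_of_pos_right (by positivity)] at hlt
  linarith

namespace IsCFOf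

variable {x : ℝ} {b : ℕ → ℕ} (h : IsCFOf x b)
include h

lemma neg_one_pow_mul_sub_cfConv_mem {n : ℕ} (hn : n ≠ 0) :
    (-1) ^ n * (x - cfConv b n) ∈ Set.Ioc 0 (cfGap b n) := by
  have hlim : Tendsto (fun m => ∑ j ∈ range m, (-1) ^ j * cfGap b (n + j)) atTop
      (𝓝 ((-1) ^ n * (x - cfConv b n))) := by
    refine (((tendsto_add_atTop_iff_nat n).2 h.2).sub_const _ |>.const_mul _).congr fun m => ?_
    rw [add_comm m n]
    exact neg_one_pow_mul_cfConv_sub h.1 hn m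
  have hanti : Antitone fun j => cfGap b (n + j) :=
    (cfGap_antitone h.1).comp_monotone fun _ _ hij => Nat.add_le_add_left hij n
  have hlower := hanti.alternating_series_le_tendsto hlim 1
  have hupper := hanti.tendsto_le_alternating_series hlim 0
  simp only [sum_range_succ, sum_range_zero] at hlower hupper
  norm_num at hlower hupper
  exact ⟨by linarith [cfGap_succ_lt h.1 n], by linarith⟩

lemma abs_sub_cfConv_le {n : ℕ} (hn : n ≠ 0) : |x - cfConv b n| ≤ cfGap b n := by
  have hmem := h.neg_one_pow_mul_sub_cfConv_mem hn
  rw [← abs_of_pos hmem.1, abs_mul, abs_pow, abs_neg, abs_one, one_pow, one_mul] at hmem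
  exact hmem.2

lemma mem_Ioo : x ∈ Set.Ioo (0 : ℝ) 1 := by
  have h₁ := (h.neg_one_pow_mul_sub_cfConv_mem one_ne_zero).1
  have h₂ := (h.neg_one_pow_mul_sub_cfConv_mem two_ne_zero).1
  have hconv₁ : cfConv b 1 = 1 / b 0 := by simp [cfConv, cfNum_succ, cfDen_zero, cfDen_one]
  have hb₀ : (1 : ℝ) ≤ b 0 := by exact_mod_cast h.1 0
  have hconv₂ : 0 ≤ cfConv b 2 := by unfold cfConv; positivity
  have : 1 / (b 0 : ℝ) ≤ 1 := by rw [div_le_one (by positivity)]; exact hb₀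
  norm_num at h₁ h₂
  constructor <;> linarith

lemma irrational : Irrational x := by
  refine irrational_of_forall_exists_abs_sub_lt fun d hd =>
    ⟨cfNum b d, cfDen b d, cfDen_pos h.1 d, ?_⟩
  have hmem := h.neg_one_pow_mul_sub_cfConv_mem hd.ne'
  have habs := h.abs_sub_cfConv_le hd.ne'
  have hq₀ : (0 : ℝ) < cfDen b d := by exact_mod_cast cfDen_pos h.1 d
  have hq₁ : (d : ℝ) < cfDen b (d + 1) := by exact_mod_cast le_cfDen h.1 (d + 1)
  have hd' : (0 : ℝ) < d := by exact_mod_cast hd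
  simp only [Int.cast_natCast]
  refine ⟨fun hx => by simp [cfConv, ← hx] at hmem, habs.trans_lt ?_⟩
  rw [cfGap, ← one_div, mul_comm (d : ℝ)]
  gcongr

end IsCFOf

noncomputable def cfValue (b : ℕ → ℕ) : ℝ := limUnder atTop (cfConv b)

lemma isCFOf_cfValue {b : ℕ → ℕ} (hb : ∀ i, 0 < b i) : IsCFOf (cfValue b) b :=
  ⟨hb, tendsto_nhds_limUnder (exists_tendsto_cfConv hb)⟩

section Prefix

variable {a b : ℕ → ℕ} {n : ℕ}

lemma cfDen_congr (h : ∀ i < n, a i = b i) : cfDen a n = cfDen b n := by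
  rw [cfDen, cfDen, List.map_congr_left fun i hi => h i (List.mem_range.1 hi)]

lemma cfConv_congr (h : ∀ i < n, a i = b i) : cfConv a n = cfConv b n := by
  rw [cfConv, cfConv, cfNum, cfNum, cfDen_congr h,
    List.map_congr_left fun i hi => h i (List.mem_range.1 hi)]

lemma IsCFOf.abs_sub_le_of_forall_lt_eq {x y : ℝ} (hx : IsCFOf x a) (hy : IsCFOf y b) (hn : n ≠ 0)
    (h : ∀ i < n, a i = b i) : |y - x| ≤ 2 / (cfDen a n : ℝ) ^ 2 := by
  have hxa := (hx.abs_sub_cfConv_le hn).trans (cfGap_le_inv_sq hx.1 n)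
  have hyb := (hy.abs_sub_cfConv_le hn).trans (cfGap_le_inv_sq hy.1 n)
  rw [← cfDen_congr h, ← cfConv_congr h] at hyb
  calc |y - x| = |(y - cfConv a n) - (x - cfConv a n)| := by ring_nf
    _ ≤ |y - cfConv a n| + |x - cfConv a n| := abs_sub _ _
    _ ≤ ((cfDen a n : ℝ) ^ 2)⁻¹ + ((cfDen a n : ℝ) ^ 2)⁻¹ := add_le_add hyb hxa
    _ = 2 / (cfDen a n : ℝ) ^ 2 := by ring

end Prefix

def extendPrefix (a : ℕ → ℕ) (t r : ℕ) : ℕ → ℕ :=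
  fun k => if k < t then a k else if k = t then r else 1

section ExtendPrefix

variable {a : ℕ → ℕ} {t r : ℕ}

lemma extendPrefix_of_lt {i : ℕ} (hi : i < t) : extendPrefix a t r i = a i := if_pos hi

lemma extendPrefix_pos (ha : ∀ i, 0 < a i) (hr : 0 < r) (i : ℕ) : 0 < extendPrefix a t r i := by
  unfold extendPrefix
  split_ifs <;> simp [ha, hr]

lemma cfSum_extendPrefix_of_le {m : ℕ} (hm : m ≤ t) : cfSum (extendPrefix a t r) m = cfSum a m :=
  sum_congr rfl fun _ hi => extendPrefix_of_lt ((mem_range.1 hi).trans_le hm)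

lemma cfSum_extendPrefix_add (j : ℕ) :
    cfSum (extendPrefix a t r) (t + j + 1) = cfSum a t + r + j := by
  induction j with
  | zero =>
    rw [cfSum, add_zero, sum_range_succ, ← cfSum, cfSum_extendPrefix_of_le le_rfl]
    simp [extendPrefix]
  | succ j ih =>
    rw [cfSum, show t + (j + 1) + 1 = t + j + 1 + 1 by ring, sum_range_succ, ← cfSum, ih,
      extendPrefix, if_neg (by omega), if_neg (by omega)]
    ring

lemma tendsto_cfValue_extendPrefix {x : ℝ} (ha : IsCFOf x a) (hr : 0 < r) :
    Tendsto (fun t => cfValue (extendPrefix a t r)) atTop (𝓝 x) := by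
  have hbound :
      ∀ᶠ t in atTop, dist (cfValue (extendPrefix a t r)) x ≤ 2 / (cfDen a t : ℝ) ^ 2 := by
    filter_upwards [eventually_ne_atTop 0] with t ht
    exact ha.abs_sub_le_of_forall_lt_eq (isCFOf_cfValue (extendPrefix_pos ha.1 hr)) ht
      fun i hi => (extendPrefix_of_lt hi).symm
  have hlim : Tendsto (fun t => 2 / (cfDen a t : ℝ) ^ 2) atTop (𝓝 0) :=
    tendsto_const_nhds.div_atTop ((tendsto_pow_atTop two_ne_zero).comp (tendsto_cfDen_atTop ha.1))
  exact tendsto_iff_dist_tendsto_zero.2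
    (squeeze_zero' (Eventually.of_forall fun _ => dist_nonneg) hbound hlim)

end ExtendPrefix

noncomputable def minkowskiTerm (b : ℕ → ℕ) (k : ℕ) : ℝ :=
  (-1) ^ k * (2 : ℝ) ^ ((1 : ℤ) - (cfSum b (k + 1) : ℤ))

noncomputable def minkowskiSeries (b : ℕ → ℕ) : ℝ := ∑' k, minkowskiTerm b k

lemma IsMinkowski.apply_of_isCFOf {Q : ℝ → ℝ} (hQ : IsMinkowski Q) {x : ℝ} {b : ℕ → ℕ}
    (h : IsCFOf x b) : Q x = minkowskiSeries b :=
  hQ.2.2.2.2 x h.mem_Ioo h.irrational b h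

lemma two_zpow_one_sub (n : ℕ) : (2 : ℝ) ^ ((1 : ℤ) - n) = 2 / 2 ^ n := by
  rw [zpow_sub₀ two_ne_zero, zpow_one, zpow_natCast]

lemma hasSum_minkowskiTerm_extendPrefix (a : ℕ → ℕ) (t r : ℕ) :
    HasSum (minkowskiTerm (extendPrefix a t r))
      (∑ k ∈ range t, minkowskiTerm a k + (-1) ^ t * (4 / 3) / 2 ^ (cfSum a t + r)) := by
  refine (hasSum_nat_add_iff' t).1 ?_
  have hhead : ∑ k ∈ range t, minkowskiTerm (extendPrefix a t r) k =
      ∑ k ∈ range t, minkowskiTerm a k :=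
    sum_congr rfl fun k hk => by
      rw [minkowskiTerm, minkowskiTerm, cfSum_extendPrefix_of_le (mem_range.1 hk)]
  have htail : (fun j => minkowskiTerm (extendPrefix a t r) (j + t)) =
      fun j => (-1) ^ t * 2 / 2 ^ (cfSum a t + r) * (-1 / 2) ^ j := by
    ext j
    rw [minkowskiTerm, add_comm j t, cfSum_extendPrefix_add, two_zpow_one_sub, div_pow, pow_add,
      pow_add]
    field_simp
  have hgeom := (hasSum_geometric_of_abs_lt_one (r := (-1 / 2 : ℝ)) (by norm_num)).mul_left
    ((-1) ^ t * 2 / 2 ^ (cfSum a t + r))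
  rw [show (-1) ^ t * 2 / 2 ^ (cfSum a t + r) * (1 - (-1 / 2 : ℝ))⁻¹ =
    (-1) ^ t * (4 / 3) / 2 ^ (cfSum a t + r) by ring] at hgeom
  rwa [hhead, add_sub_cancel_left, htail]

lemma minkowskiSeries_extendPrefix_one_sub_two (a : ℕ → ℕ) (t : ℕ) :
    minkowskiSeries (extendPrefix a t 1) - minkowskiSeries (extendPrefix a t 2) =
      (-1) ^ t / 3 / 2 ^ cfSum a t := by
  rw [minkowskiSeries, minkowskiSeries, (hasSum_minkowskiTerm_extendPrefix a t 1).tsum_eq,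
    (hasSum_minkowskiTerm_extendPrefix a t 2).tsum_eq, pow_add, pow_add]
  field_simp
  ring

lemma eventually_cfDen_sq_le {x : ℝ} {a : ℕ → ℕ} {Q : ℝ → ℝ} (ha : IsCFOf x a)
    (hQ : IsMinkowski Q) (hder : HasDerivAt Q 0 x) {ε : ℝ} (hε : 0 < ε) :
    ∀ᶠ t in atTop, (cfDen a t : ℝ) ^ 2 ≤ ε * 2 ^ cfSum a t := by
  have hQx : ∀ᶠ y in 𝓝 x, |Q y - Q x| ≤ ε / 12 * |y - x| := by
    filter_upwards [(hasDerivAt_iff_isLittleO.1 hder).def (by positivity : 0 < ε / 12)] with y hy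
    simpa using hy
  filter_upwards [(tendsto_cfValue_extendPrefix ha one_pos).eventually hQx,
    (tendsto_cfValue_extendPrefix ha two_pos).eventually hQx, eventually_ne_atTop 0]
    with t h₁ h₂ ht
  set y₁ := cfValue (extendPrefix a t 1)
  set y₂ := cfValue (extendPrefix a t 2)
  have hy₁ : IsCFOf y₁ (extendPrefix a t 1) := isCFOf_cfValue (extendPrefix_pos ha.1 one_pos)
  have hy₂ : IsCFOf y₂ (extendPrefix a t 2) := isCFOf_cfValue (extendPrefix_pos ha.1 two_pos)
  have hd₁ := ha.abs_sub_le_of_forall_lt_eq hy₁ ht fun i hi => (extendPrefix_of_lt hi).symm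
  have hd₂ := ha.abs_sub_le_of_forall_lt_eq hy₂ ht fun i hi => (extendPrefix_of_lt hi).symm
  have hq : (0 : ℝ) < cfDen a t := by exact_mod_cast cfDen_pos ha.1 t
  have hgap : 1 / 3 / 2 ^ cfSum a t ≤ ε / 3 / (cfDen a t : ℝ) ^ 2 :=
    calc 1 / 3 / 2 ^ cfSum a t = |Q y₁ - Q y₂| := by
          rw [hQ.apply_of_isCFOf hy₁, hQ.apply_of_isCFOf hy₂,
            minkowskiSeries_extendPrefix_one_sub_two, abs_div, abs_div, abs_pow, abs_neg, abs_one,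
            one_pow, abs_of_pos (by positivity : (0 : ℝ) < 2 ^ cfSum a t)]
          norm_num
      _ ≤ |Q y₁ - Q x| + |Q y₂ - Q x| := by
          rw [abs_sub_comm (Q y₂)]
          exact abs_sub_le _ _ _
      _ ≤ ε / 12 * (2 / (cfDen a t : ℝ) ^ 2) + ε / 12 * (2 / (cfDen a t : ℝ) ^ 2) :=
          add_le_add (h₁.trans (by gcongr)) (h₂.trans (by gcongr))
      _ = ε / 3 / (cfDen a t : ℝ) ^ 2 := by ring
  rw [div_le_div_iff₀ (by positivity) (by positivity)] at hgap
  linarith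

lemma isLittleO_cfDen {x : ℝ} {a : ℕ → ℕ} {Q : ℝ → ℝ} (ha : IsCFOf x a) (hQ : IsMinkowski Q)
    (hder : HasDerivAt Q 0 x) :
    (fun t => (cfDen a t : ℝ)) =o[atTop] fun t => √2 ^ cfSum a t := by
  refine Asymptotics.IsLittleO.of_bound fun c hc => ?_
  filter_upwards [eventually_cfDen_sq_le ha hQ hder (pow_pos hc 2)] with t ht
  rw [Real.norm_natCast, Real.norm_of_nonneg (by positivity)]
  have hsq : (√2 ^ cfSum a t) ^ 2 = 2 ^ cfSum a t := by
    rw [← pow_mul, mul_comm, pow_mul, Real.sq_sqrt zero_le_two]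
  refine le_of_pow_le_pow_left₀ two_ne_zero (by positivity) ?_
  rwa [mul_pow, hsq]

theorem stmt11_general (x : ℝ)
    (a : ℕ → ℕ) (ha : IsCFOf x a)
    (Q : ℝ → ℝ) (hQ : IsMinkowski Q) (hder : HasDerivAt Q 0 x) :
    ∀ c : ℝ, 0 < c → ∃ T : ℕ, ∀ t : ℕ, T ≤ t →
      ∀ L : List (List ℕ), L.flatten = (List.range t).map a → (∀ B ∈ L, B ≠ []) →
        (L.map (fun B => (cont B : ℝ))).prod < c * (Real.sqrt 2) ^ (cfSum a t) := by
  intro c hc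
  obtain ⟨T, hT⟩ := ((isLittleO_cfDen ha hQ hder).def (half_pos hc)).exists_forall_of_atTop
  refine ⟨T, fun t ht L hL _ => ?_⟩
  have hq := hT t ht
  rw [Real.norm_natCast, Real.norm_of_nonneg (by positivity)] at hq
  have hprod : (L.map cont).prod ≤ cfDen a t :=
    (prod_map_cont_le_cont_flatten L).trans_eq (congrArg cont hL)
  calc (L.map fun B => (cont B : ℝ)).prod = ((L.map cont).prod : ℕ) := by
        rw [Nat.cast_list_prod, List.map_map]; rfl
    _ ≤ cfDen a t := by exact_mod_cast hprod
    _ ≤ c / 2 * √2 ^ cfSum a t := hq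
    _ < c * √2 ^ cfSum a t := by gcongr; linarith

/-- If `?'(x) = 0`, then for every `c > 0`, for all large `t` and every partition of
`(a_1,…,a_t)` into consecutive blocks `B_1,…,B_m`, one has
`∏_j ⟨B_j⟩ < c (√2)^{S_x(t)}`. -/
theorem stmt11 (x : ℝ) (hx : x ∈ Set.Ioo (0:ℝ) 1) (hirr : Irrational x)
    (a : ℕ → ℕ) (ha : IsCFOf x a)
    (Q : ℝ → ℝ) (hQ : IsMinkowski Q) (hder : HasDerivAt Q 0 x) :
    ∀ c : ℝ, 0 < c → ∃ T : ℕ, ∀ t : ℕ, T ≤ t →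
      ∀ L : List (List ℕ), L.flatten = (List.range t).map a → (∀ B ∈ L, B ≠ []) →
        (L.map (fun B => (cont B : ℝ))).prod < c * (Real.sqrt 2) ^ (cfSum a t) :=
  stmt11_general x a ha Q hQ hder
end
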